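/- arXiv:2602.16431 — 6 statements merged into one kernel-verified Lean document; each statement's English description precedes it below -/
import Mathlib

section
/- If j ∈ J and e_{J \ {j}} = e_J, then M_{J \ {j}} = M_J. Consequently, for every finset M of Fin n, the k-submodule of T spanned by { b_K : M_K = M } is invariant under the Taylor differential ∂, and T equipped with ∂ is the internal direct sum, over the distinct values M of the map J ↦ M_J, of these ∂-invariant submodules. -/
open scoped Classical

/-- `M_J` : the union of all finsets `K` with `e_K = e_J`, where `e_J = J.sup e` is the
exponent vector of the lcm `f_J`. -/
noncomputable def MJ {n : ℕ} {σ : Type*} (e : Fin n → (σ →₀ ℕ)) (J : Finset (Fin n)) :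
    Finset (Fin n) :=
  Finset.sup (Finset.univ.filter fun K : Finset (Fin n) => K.sup e = J.sup e) id

/-- The Taylor differential over `k` on the free module `T = Finset (Fin n) →₀ k`
with basis `b_J`, determined by
`∂ b_J = ∑_{j ∈ J, e_{J \ {j}} = e_J} (-1)^{#{p ∈ J : p < j}} • b_{J \ {j}}`. -/
noncomputable def taylorD {n : ℕ} {σ : Type*} (e : Fin n → (σ →₀ ℕ))
    (k : Type*) [CommRing k] :
    (Finset (Fin n) →₀ k) →ₗ[k] (Finset (Fin n) →₀ k) :=
  Finsupp.lsum k fun J => LinearMap.toSpanSingleton k _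
    (∑ j ∈ J.filter (fun j => (J.erase j).sup e = J.sup e),
      ((-1 : k) ^ (J.filter (fun p => p < j)).card) • Finsupp.single (J.erase j) (1 : k))

/-- The `k`-submodule of `T` spanned by the basis vectors `b_K` with `M_K = M`. -/
noncomputable def taylorPiece {n : ℕ} {σ : Type*} (e : Fin n → (σ →₀ ℕ))
    (k : Type*) [CommRing k] (M : Finset (Fin n)) :
    Submodule k (Finset (Fin n) →₀ k) :=
  Submodule.span k {v : Finset (Fin n) →₀ k | ∃ K : Finset (Fin n),
    MJ e K = M ∧ v = Finsupp.single K (1 : k)}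

/-! `M_J` depends on `J` only through `e_J`, and `∂` only deletes elements `j` with
`e_{J \ {j}} = e_J`, so `∂` preserves `M`. Each piece is the submodule of `T` supported on a
fibre of `J ↦ M_J`, and these fibres partition the basis. -/

theorem Finsupp.isInternal_supported {R M α ι : Type*} [Ring R] [AddCommGroup M] [Module R M]
    [DecidableEq ι] {s : ι → Set α} (hdisj : Pairwise (Function.onFun Disjoint s))
    (hcover : ⋃ i, s i = Set.univ) :
    DirectSum.IsInternal fun i => supported M R (s i) := by
  rw [DirectSum.isInternal_submodule_iff_iSupIndep_and_iSup_eq_top]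
  refine ⟨fun i => ?_, by rw [← supported_iUnion, hcover, supported_univ]⟩
  have hrest : ⨆ (j) (_ : j ≠ i), supported M R (s j) ≤ supported M R (s i)ᶜ :=
    iSup₂_le fun j hj => supported_mono ((hdisj hj).subset_compl_right)
  exact (disjoint_supported_supported disjoint_compl_right).mono_right hrest

theorem Finsupp.isInternal_supported_fiber {R M α β : Type*} [Ring R] [AddCommGroup M]
    [Module R M] (f : α → β) [DecidableEq {b : β // ∃ a, f a = b}] :
    DirectSum.IsInternal fun b : {b : β // ∃ a, f a = b} => supported M R (f ⁻¹' {b.1}) := by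
  refine Finsupp.isInternal_supported (fun b c hbc => ?_) ?_
  · exact Set.disjoint_left.2 fun a hb hc => hbc (Subtype.ext (hb.symm.trans hc))
  · exact Set.eq_univ_of_forall fun a => Set.mem_iUnion.2 ⟨⟨f a, a, rfl⟩, rfl⟩

section Taylor

variable {n : ℕ} {σ : Type*} (e : Fin n → (σ →₀ ℕ)) (k : Type*) [CommRing k]

theorem MJ_congr {J J' : Finset (Fin n)} (h : J.sup e = J'.sup e) : MJ e J = MJ e J' := by
  rw [MJ, MJ, h]

theorem taylorPiece_eq_supported (M : Finset (Fin n)) :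
    taylorPiece e k M = Finsupp.supported k k (MJ e ⁻¹' {M}) := by
  rw [Finsupp.supported_eq_span_single, taylorPiece]
  congr 1
  ext v
  exact ⟨fun ⟨K, hK, hv⟩ => ⟨K, hK, hv.symm⟩, fun ⟨K, hK, hv⟩ => ⟨K, hK, hv.symm⟩⟩

theorem taylorD_single (J : Finset (Fin n)) :
    taylorD e k (Finsupp.single J 1) =
      ∑ j ∈ J.filter (fun j => (J.erase j).sup e = J.sup e),
        ((-1 : k) ^ (J.filter (fun p => p < j)).card) • Finsupp.single (J.erase j) (1 : k) := by
  rw [taylorD, Finsupp.lsum_single, LinearMap.toSpanSingleton_apply, one_smul]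

theorem taylorD_single_mem_taylorPiece (J : Finset (Fin n)) :
    taylorD e k (Finsupp.single J 1) ∈ taylorPiece e k (MJ e J) := by
  rw [taylorD_single, taylorPiece_eq_supported]
  refine Submodule.sum_mem _ fun j hj => Submodule.smul_mem _ _ ?_
  exact Finsupp.single_mem_supported k 1 (MJ_congr e (Finset.mem_filter.1 hj).2)

theorem map_taylorD_taylorPiece_le (M : Finset (Fin n)) :
    (taylorPiece e k M).map (taylorD e k) ≤ taylorPiece e k M := by
  rw [Submodule.map_le_iff_le_comap, taylorPiece, Submodule.span_le]
  rintro v ⟨K, rfl, rfl⟩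
  exact taylorD_single_mem_taylorPiece e k K

end Taylor

/-- If `j ∈ J` and `e_{J \ {j}} = e_J` then `M_{J \ {j}} = M_J`.  Consequently each
submodule spanned by `{ b_K : M_K = M }` is invariant under the Taylor differential,
and `T` is the internal direct sum of these submodules over the distinct values `M` of
the map `J ↦ M_J`. -/
theorem taylor_decomposition {n : ℕ} {σ : Type*} (e : Fin n → (σ →₀ ℕ))
    (k : Type*) [CommRing k] :
    (∀ (J : Finset (Fin n)) (j : Fin n), j ∈ J → (J.erase j).sup e = J.sup e →
        MJ e (J.erase j) = MJ e J) ∧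
      (∀ M : Finset (Fin n),
        Submodule.map (taylorD e k) (taylorPiece e k M) ≤ taylorPiece e k M) ∧
      DirectSum.IsInternal
        (fun M : {M : Finset (Fin n) // ∃ J, MJ e J = M} => taylorPiece e k M.1) := by
  refine ⟨fun J j _ h => MJ_congr e h, map_taylorD_taylorPiece_le e k, ?_⟩
  simp only [taylorPiece_eq_supported]
  exact Finsupp.isInternal_supported_fiber (MJ e)
end

section
/- Assume e i ≠ 0 for every i ∈ Fin n. Then for every a : Fin n → k, the map d_a := ∂ + μ_a satisfies d_a ∘ d_a = 0. -/
open scoped Classical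

/-- The multiplication map `μ_a` determined by
`μ_a b_J = ∑_{j ∉ J, e_j + e_J = e_{insert j J}} (-1)^{#{p ∈ J : p < j}} (a j) • b_{insert j J}`. -/
noncomputable def muMap {n : ℕ} {σ : Type*} (e : Fin n → (σ →₀ ℕ))
    (k : Type*) [CommRing k] (a : Fin n → k) :
    (Finset (Fin n) →₀ k) →ₗ[k] (Finset (Fin n) →₀ k) :=
  Finsupp.lsum k fun J => LinearMap.toSpanSingleton k _
    (∑ j ∈ Finset.univ.filter
        (fun j : Fin n => j ∉ J ∧ e j + J.sup e = (insert j J).sup e),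
      (((-1 : k) ^ (J.filter (fun p => p < j)).card) * a j) •
        Finsupp.single (insert j J) (1 : k))

/-!
On the basis, `d_a b_J` is a combination of the `b_{J ∆ {j}}`: removing `j ∈ J` is allowed when
`e_j ≤ e_{J ∖ {j}}`, adding `j ∉ J` when `e_j ⊓ e_J = 0`. Hence `d_a² b_J` is a sum over ordered
pairs `(j, i)` of toggles. A diagonal pair would need both `e_j ≤ e_{J'}` and `e_j ⊓ e_{J'} = 0`,
i.e. `e_j = 0`. For `i ≠ j` both orders lead to `J ∆ {i, j}`, the pair is admissible in one order
iff in the other (distributivity of `σ →₀ ℕ`), and the signs `(-1)^{#{p ∈ J | p < j}}` make the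
two contributions cancel.
-/

open scoped symmDiff

open Finset

noncomputable instance Finsupp.instDistribLattice {σ M : Type*} [Zero M] [DistribLattice M] :
    DistribLattice (σ →₀ M) where
  __ := Finsupp.lattice
  le_sup_inf _ _ _ _ := le_sup_inf

lemma Finsupp.add_eq_sup_iff_disjoint {σ : Type*} (f g : σ →₀ ℕ) :
    f + g = f ⊔ g ↔ Disjoint f g := by
  simp only [_root_.disjoint_iff, Finsupp.ext_iff, Finsupp.add_apply, Finsupp.sup_apply,
    Finsupp.inf_apply, bot_eq_zero, Finsupp.coe_zero, Pi.zero_apply]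
  exact forall_congr' fun _ => Nat.add_eq_max_iff.trans Nat.min_eq_zero_iff.symm

section Finset

variable {ι : Type*} [DecidableEq ι]

lemma Finset.symmDiff_singleton_of_mem {J : Finset ι} {j : ι} (hj : j ∈ J) :
    J ∆ {j} = J.erase j := by
  ext; simp only [mem_symmDiff, mem_singleton, mem_erase]; grind

lemma Finset.symmDiff_singleton_of_notMem {J : Finset ι} {j : ι} (hj : j ∉ J) :
    J ∆ {j} = insert j J := by
  ext; simp only [mem_symmDiff, mem_singleton, mem_insert]; grind

lemma Finset.mem_symmDiff_singleton_of_ne {J : Finset ι} {i j : ι} (hij : i ≠ j) :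
    i ∈ J ∆ {j} ↔ i ∈ J := by
  simp [mem_symmDiff, hij]

lemma Finset.sup_erase_eq_sup_iff {α : Type*} [SemilatticeSup α] [OrderBot α] {e : ι → α}
    {J : Finset ι} {j : ι} (hj : j ∈ J) :
    (J.erase j).sup e = J.sup e ↔ e j ≤ (J.erase j).sup e := by
  rw [← sup_eq_right, eq_comm, ← sup_insert, insert_erase hj]

lemma neg_one_pow_card_symmDiff_singleton {R : Type*} [Monoid R] [HasDistribNeg R]
    (s : Finset ι) (i : ι) : (-1 : R) ^ #(s ∆ {i}) = -(-1) ^ #s := by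
  by_cases hi : i ∈ s
  · rw [symmDiff_singleton_of_mem hi, ← card_erase_add_one hi, pow_succ, mul_neg_one, neg_neg]
  · rw [symmDiff_singleton_of_notMem hi, card_insert_of_notMem hi, pow_succ, mul_neg_one]

end Finset

section Toggle

variable {ι k : Type*} [Fintype ι] [DecidableEq ι] [CommSemiring k]

noncomputable def toggleMap (c : Finset ι → ι → k) : (Finset ι →₀ k) →ₗ[k] (Finset ι →₀ k) :=
  Finsupp.lsum k fun J => LinearMap.toSpanSingleton k _
    (∑ j, c J j • Finsupp.single (J ∆ {j}) 1)

lemma toggleMap_single_one (c : Finset ι → ι → k) (J : Finset ι) :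
    toggleMap c (Finsupp.single J 1) = ∑ j, c J j • Finsupp.single (J ∆ {j}) 1 := by
  simp [toggleMap]

theorem toggleMap_comp_self_eq_zero (c : Finset ι → ι → k)
    (hdiag : ∀ J j, c J j * c (J ∆ {j}) j = 0)
    (hanti : ∀ J i j, i ≠ j → c J j * c (J ∆ {j}) i + c J i * c (J ∆ {i}) j = 0) :
    toggleMap c ∘ₗ toggleMap c = 0 := by
  refine Finsupp.lhom_ext' fun J => LinearMap.ext_ring ?_
  simp only [LinearMap.comp_apply, Finsupp.lsingle_apply, LinearMap.zero_apply,
    toggleMap_single_one, map_sum, map_smul, Finset.smul_sum, smul_smul]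
  rw [← Fintype.sum_prod_type']
  refine Finset.sum_involution (fun p _ => p.swap) ?_ ?_ (fun _ _ => mem_univ _)
    (fun p _ => p.swap_swap)
  · rintro ⟨j, i⟩ -
    obtain rfl | hij := eq_or_ne i j
    · simp [hdiag]
    · rw [Prod.swap_prod_mk, symmDiff_right_comm, ← add_smul, hanti J i j hij, zero_smul]
  · rintro ⟨j, i⟩ - hne hswap
    obtain rfl : i = j := congrArg Prod.fst hswap
    simp [hdiag] at hne

end Toggle

section Admissible

variable {ι α : Type*} [DecidableEq ι] [Lattice α] [OrderBot α]

/-- For `e` valued in `σ →₀ ℕ` these are the conditions `e_{J ∖ {j}} = e_J` of `∂` and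
`e_j + e_J = e_{insert j J}` of `μ_a` (see `Finset.sup_erase_eq_sup_iff` and
`Finsupp.add_eq_sup_iff_disjoint`). -/
def TaylorAdmissible (e : ι → α) (J : Finset ι) (j : ι) : Prop :=
  if j ∈ J then e j ≤ (J.erase j).sup e else Disjoint (e j) (J.sup e)

variable {e : ι → α} {J : Finset ι} {j : ι}

lemma taylorAdmissible_iff_of_mem (hj : j ∈ J) :
    TaylorAdmissible e J j ↔ e j ≤ (J.erase j).sup e := by
  simp [TaylorAdmissible, hj]

lemma taylorAdmissible_iff_of_notMem (hj : j ∉ J) :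
    TaylorAdmissible e J j ↔ Disjoint (e j) (J.sup e) := by
  simp [TaylorAdmissible, hj]

lemma TaylorAdmissible.eq_bot_of_symmDiff (h : TaylorAdmissible e J j)
    (h' : TaylorAdmissible e (J ∆ {j}) j) : e j = ⊥ := by
  by_cases hj : j ∈ J
  · rw [symmDiff_singleton_of_mem hj, taylorAdmissible_iff_of_notMem (notMem_erase j J)] at h'
    exact h'.eq_bot_of_le ((taylorAdmissible_iff_of_mem hj).1 h)
  · rw [symmDiff_singleton_of_notMem hj, taylorAdmissible_iff_of_mem (mem_insert_self j J),
      erase_insert hj] at h'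
    exact ((taylorAdmissible_iff_of_notMem hj).1 h).eq_bot_of_le h'

end Admissible

lemma TaylorAdmissible.swap {ι α : Type*} [DecidableEq ι] [DistribLattice α] [OrderBot α]
    {e : ι → α} {J : Finset ι} {i j : ι} (hij : i ≠ j) (h : TaylorAdmissible e J j)
    (h' : TaylorAdmissible e (J ∆ {j}) i) :
    TaylorAdmissible e J i ∧ TaylorAdmissible e (J ∆ {i}) j := by
  by_cases hi : i ∈ J <;> by_cases hj : j ∈ J
  · have hi' : i ∈ J.erase j := mem_erase.2 ⟨hij, hi⟩
    have hj' : j ∈ J.erase i := mem_erase.2 ⟨hij.symm, hj⟩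
    rw [taylorAdmissible_iff_of_mem hj] at h
    rw [symmDiff_singleton_of_mem hj, taylorAdmissible_iff_of_mem hi', erase_right_comm] at h'
    rw [taylorAdmissible_iff_of_mem hi, symmDiff_singleton_of_mem hi,
      taylorAdmissible_iff_of_mem hj']
    refine ⟨h'.trans (sup_mono (erase_subset _ _)), h.trans ?_⟩
    rw [← insert_erase (mem_erase.2 ⟨hij, hi⟩), sup_insert, erase_right_comm]
    exact sup_le h' le_rfl
  · have hi' : i ∈ insert j J := mem_insert_of_mem hi
    rw [taylorAdmissible_iff_of_notMem hj] at h
    rw [symmDiff_singleton_of_notMem hj, taylorAdmissible_iff_of_mem hi',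
      erase_insert_of_ne hij.symm, sup_insert] at h'
    rw [taylorAdmissible_iff_of_mem hi, symmDiff_singleton_of_mem hi,
      taylorAdmissible_iff_of_notMem (fun hj' => hj (mem_of_mem_erase hj'))]
    exact ⟨Disjoint.left_le_of_le_sup_left h' (h.symm.mono_left (le_sup hi)),
      h.mono_right (sup_mono (erase_subset _ _))⟩
  · have hi' : i ∉ J.erase j := fun hi' => hi (mem_of_mem_erase hi')
    rw [taylorAdmissible_iff_of_mem hj] at h
    rw [symmDiff_singleton_of_mem hj, taylorAdmissible_iff_of_notMem hi'] at h'
    rw [taylorAdmissible_iff_of_notMem hi, symmDiff_singleton_of_notMem hi,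
      taylorAdmissible_iff_of_mem (mem_insert_of_mem hj), erase_insert_of_ne hij, sup_insert,
      ← (sup_erase_eq_sup_iff hj).2 h]
    exact ⟨h', le_sup_of_le_right h⟩
  · have hi' : i ∉ insert j J := by simp [hij, hi]
    have hj' : j ∉ insert i J := by simp [hij.symm, hj]
    rw [taylorAdmissible_iff_of_notMem hj] at h
    rw [symmDiff_singleton_of_notMem hj, taylorAdmissible_iff_of_notMem hi', sup_insert,
      disjoint_sup_right] at h'
    rw [taylorAdmissible_iff_of_notMem hi, symmDiff_singleton_of_notMem hi,
      taylorAdmissible_iff_of_notMem hj', sup_insert, disjoint_sup_right]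
    exact ⟨h'.2, h'.1.symm, h⟩

section Sign

variable {ι k : Type*} [LinearOrder ι] [Ring k] {J : Finset ι} {i j : ι}

variable (k) in
def taylorSign (J : Finset ι) (j : ι) : k := (-1) ^ #{p ∈ J | p < j}

lemma taylorSign_symmDiff_of_lt (h : i < j) : taylorSign k (J ∆ {j}) i = taylorSign k J i := by
  unfold taylorSign
  congr 2
  ext p
  simp only [mem_filter, mem_symmDiff, mem_singleton]
  grind

lemma taylorSign_symmDiff_of_gt (h : j < i) :
    taylorSign k (J ∆ {j}) i = -taylorSign k J i := by
  unfold taylorSign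
  rw [← neg_one_pow_card_symmDiff_singleton _ j]
  congr 2
  ext p
  simp only [mem_filter, mem_symmDiff, mem_singleton]
  grind

end Sign

section Coeff

variable {ι α k : Type*} [LinearOrder ι] [DistribLattice α] [OrderBot α] [CommRing k]

noncomputable def taylorCoeff (e : ι → α) (a : ι → k) (J : Finset ι) (j : ι) : k :=
  if TaylorAdmissible e J j then taylorSign k J j * (if j ∈ J then 1 else a j) else 0

variable {e : ι → α} {a : ι → k} {J : Finset ι} {i j : ι}

lemma taylorSign_anticomm (hij : i ≠ j) :
    taylorSign k J j * taylorSign k (J ∆ {j}) i +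
      taylorSign k J i * taylorSign k (J ∆ {i}) j = 0 := by
  rcases hij.lt_or_gt with h | h
  · rw [taylorSign_symmDiff_of_lt h, taylorSign_symmDiff_of_gt h]
    ring
  · rw [taylorSign_symmDiff_of_gt h, taylorSign_symmDiff_of_lt h]
    ring

lemma taylorCoeff_mul_symmDiff_self_eq_zero (he : e j ≠ ⊥) :
    taylorCoeff e a J j * taylorCoeff e a (J ∆ {j}) j = 0 := by
  rw [taylorCoeff, taylorCoeff, ite_zero_mul_ite_zero,
    if_neg fun h => he (h.1.eq_bot_of_symmDiff h.2)]

lemma taylorCoeff_anticomm (hij : i ≠ j) :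
    taylorCoeff e a J j * taylorCoeff e a (J ∆ {j}) i +
      taylorCoeff e a J i * taylorCoeff e a (J ∆ {i}) j = 0 := by
  simp only [taylorCoeff, ite_zero_mul_ite_zero, mem_symmDiff_singleton_of_ne hij,
    mem_symmDiff_singleton_of_ne hij.symm]
  by_cases h : TaylorAdmissible e J j ∧ TaylorAdmissible e (J ∆ {j}) i
  · rw [if_pos h, if_pos (h.1.swap hij h.2)]
    linear_combination ((if j ∈ J then 1 else a j) * (if i ∈ J then 1 else a i)) *
      taylorSign_anticomm (k := k) (J := J) hij
  · rw [if_neg h, if_neg fun h' => h (h'.1.swap hij.symm h'.2), add_zero]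

end Coeff

lemma taylorD_add_muMap_eq_toggleMap {n : ℕ} {σ k : Type*} [CommRing k] (e : Fin n → σ →₀ ℕ)
    (a : Fin n → k) :
    taylorD e k + muMap e k a = toggleMap (taylorCoeff e a) := by
  refine Finsupp.lhom_ext' fun J => LinearMap.ext_ring ?_
  have hfilter : J.filter (fun j => (J.erase j).sup e = J.sup e) =
      univ.filter (fun j => j ∈ J ∧ (J.erase j).sup e = J.sup e) := by
    ext; simp
  have hterm (j : Fin n) :
      (if j ∈ J ∧ (J.erase j).sup e = J.sup e then
        taylorSign k J j • Finsupp.single (J.erase j) (1 : k) else 0) +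
      (if j ∉ J ∧ e j + J.sup e = (insert j J).sup e then
        (taylorSign k J j * a j) • Finsupp.single (insert j J) (1 : k) else 0) =
      taylorCoeff e a J j • Finsupp.single (J ∆ {j}) (1 : k) := by
    by_cases hj : j ∈ J
    · simp only [taylorCoeff, taylorAdmissible_iff_of_mem hj, ← sup_erase_eq_sup_iff hj,
        symmDiff_singleton_of_mem hj, hj, true_and, not_true_eq_false, false_and, if_true,
        if_false, add_zero, mul_one, ite_smul, zero_smul]
    · simp only [taylorCoeff, taylorAdmissible_iff_of_notMem hj, sup_insert,
        Finsupp.add_eq_sup_iff_disjoint, symmDiff_singleton_of_notMem hj, hj, false_and,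
        not_false_eq_true, true_and, if_false, zero_add, ite_smul, zero_smul]
  simp only [LinearMap.comp_apply, Finsupp.lsingle_apply, LinearMap.add_apply,
    toggleMap_single_one, taylorD, muMap, Finsupp.lsum_single, LinearMap.toSpanSingleton_apply,
    one_smul]
  rw [hfilter, sum_filter, sum_filter, ← sum_add_distrib]
  exact sum_congr rfl fun j _ => hterm j

/-- If `e i ≠ 0` for every `i`, then for every `a : Fin n → k` the map
`d_a = ∂ + μ_a` squares to zero. -/
theorem dA_squared_eq_zero {n : ℕ} {σ : Type*} (e : Fin n → (σ →₀ ℕ))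
    (k : Type*) [CommRing k] (he : ∀ i : Fin n, e i ≠ 0) (a : Fin n → k) :
    (taylorD e k + muMap e k a) ∘ₗ (taylorD e k + muMap e k a) = 0 := by
  rw [taylorD_add_muMap_eq_toggleMap]
  exact toggleMap_comp_self_eq_zero _ (fun _ j => taylorCoeff_mul_symmDiff_self_eq_zero (he j))
    fun _ _ _ hij => taylorCoeff_anticomm hij
end

section
/- For every finset J ⊆ M and every j ∈ J: (-1)^{#{p ∈ J : p < j}} · ksgn_M(J) · ksgn_M(J \ {j}) = (-1)^{#{p ∈ M \ J : p < j}}. -/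
/-- The cochain-complex sign `ksgn_M(S) = (-1)^{#{p ∈ S : position of p in M is even}}`,
where the position of `p` in `M` is `#{q ∈ M : q ≤ p}`. -/
def ksgn (M S : Finset ℕ) : ℤ :=
  (-1) ^ (S.filter fun p => Even ((M.filter fun q => q ≤ p).card)).card

/-- For every finset `J ⊆ M` and every `j ∈ J`:
`(-1)^{#{p ∈ J : p < j}} · ksgn_M(J) · ksgn_M(J \ {j}) = (-1)^{#{p ∈ M \ J : p < j}}`. -/
theorem ksgn_erase_relation (M J : Finset ℕ) (hJM : J ⊆ M) (j : ℕ) (hj : j ∈ J) :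
    (-1 : ℤ) ^ (J.filter fun p => p < j).card * ksgn M J * ksgn M (J.erase j) =
      (-1 : ℤ) ^ ((M \ J).filter fun p => p < j).card := by
  classical
  have key : ∀ x y : ℕ, x % 2 = y % 2 → (-1:ℤ)^x = (-1)^y := by
    intro x y h
    rw [← Nat.div_add_mod x 2, ← Nat.div_add_mod y 2, pow_add, pow_add, pow_mul, pow_mul]
    simp [h]
  have hjM := hJM hj
  set a := (J.filter fun p => p < j).card with ha
  set b := ((M \ J).filter fun p => p < j).card with hb
  have hpos : (M.filter fun q => q ≤ j).card = (M.filter fun q => q < j).card + 1 := by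
    have h1 : (M.filter fun q => q ≤ j) = insert j (M.filter fun q => q < j) := by
      ext q
      simp only [Finset.mem_filter, Finset.mem_insert]
      constructor
      · rintro ⟨hq, hqj⟩
        rcases eq_or_lt_of_le hqj with h | h
        · exact Or.inl h
        · exact Or.inr ⟨hq, h⟩
      · rintro (rfl | ⟨hq, h⟩)
        · exact ⟨hjM, le_refl _⟩
        · exact ⟨hq, le_of_lt h⟩
    rw [h1, Finset.card_insert_of_notMem]
    simp
  have hsplit : (M.filter fun q => q < j).card = a + b := by
    rw [ha, hb, ← Finset.card_union_of_disjoint, ← Finset.filter_union,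
      Finset.union_sdiff_of_subset hJM]
    exact Finset.disjoint_filter_filter Finset.disjoint_sdiff
  set c := ((J.erase j).filter fun p => Even ((M.filter fun q => q ≤ p).card)).card with hc
  have herase : (J.filter fun p => Even ((M.filter fun q => q ≤ p).card)).card
      = c + (if Even ((M.filter fun q => q ≤ j).card) then 1 else 0) := by
    rw [hc, Finset.filter_erase]
    by_cases hev : Even ((M.filter fun q => q ≤ j).card)
    · have hjmem : j ∈ J.filter fun p => Even ((M.filter fun q => q ≤ p).card) :=
        Finset.mem_filter.mpr ⟨hj, hev⟩
      rw [Finset.card_erase_of_mem hjmem]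
      have := Finset.card_pos.mpr ⟨j, hjmem⟩
      simp [hev]
      omega
    · rw [Finset.erase_eq_of_notMem (by simp [hev])]
      simp [hev]
  unfold ksgn
  rw [herase, ← hc]
  rw [← pow_add, ← pow_add]
  apply key
  by_cases hev : Even ((M.filter fun q => q ≤ j).card)
  · rw [Nat.even_iff] at hev
    simp only [if_pos (Nat.even_iff.mpr hev)]
    omega
  · rw [Nat.even_iff] at hev
    simp only [if_neg (fun h => hev (Nat.even_iff.mp h))]
    omega
end

section
/- Let S ⊆ M be a finset and let L be the list of natural numbers obtained by concatenating the elements of S listed in strictly decreasing order with the elements of M \ S listed in strictly increasing order. Then (-1)^{number of inversions of L} = ksgn_M(S), where an inversion of L is a pair of positions i < j with L(i) > L(j). -/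
open Finset

section Inversions

variable {α : Type*} [LinearOrder α]

def invCount {n : ℕ} (f : Fin n → α) : ℕ :=
  #{p : Fin n × Fin n | p.1 < p.2 ∧ f p.2 < f p.1}

lemma invCount_eq_sum {n : ℕ} (f : Fin n → α) :
    invCount f = ∑ i, ∑ j, if i < j ∧ f j < f i then 1 else 0 := by
  rw [invCount, card_filter, Fintype.sum_prod_type]

lemma invCount_append {m n : ℕ} (f : Fin m → α) (g : Fin n → α) :
    invCount (Fin.append f g) =
      invCount f + invCount g + #{p : Fin m × Fin n | g p.2 < f p.1} := by
  have castAdd_lt_natAdd (i : Fin m) (j : Fin n) : Fin.castAdd n i < Fin.natAdd m j := by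
    rw [Fin.lt_def, Fin.val_castAdd, Fin.val_natAdd]; omega
  have castAdd_lt_castAdd (i j : Fin m) : Fin.castAdd n i < Fin.castAdd n j ↔ i < j :=
    (Fin.castAddOrderEmb n).lt_iff_lt
  have not_natAdd_lt_castAdd (i : Fin m) (j : Fin n) : ¬ Fin.natAdd m j < Fin.castAdd n i :=
    (castAdd_lt_natAdd i j).asymm
  simp only [invCount_eq_sum, card_filter, Fintype.sum_prod_type, Fin.sum_univ_add,
    Fin.append_left, Fin.append_right, castAdd_lt_natAdd, not_natAdd_lt_castAdd,
    castAdd_lt_castAdd, Fin.natAdd_lt_natAdd_iff, true_and, false_and,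
    if_false, sum_const_zero, add_zero, sum_add_distrib]
  ring

lemma invCount_of_strictMono {n : ℕ} {f : Fin n → α} (hf : StrictMono f) : invCount f = 0 :=
  card_eq_zero.2 <| filter_eq_empty_iff.2 fun _ _ h => (hf h.1).asymm h.2

lemma invCount_of_strictAnti {n : ℕ} {f : Fin n → α} (hf : StrictAnti f) :
    invCount f = #{p : Fin n × Fin n | f p.2 < f p.1} := by
  simp only [invCount, hf.lt_iff_gt, and_self]

lemma invCount_get_ofFn {n : ℕ} (f : Fin n → α) : invCount (List.ofFn f).get = invCount f := by
  have invCount_comp_cast (m : ℕ) (h : m = n) : invCount (f ∘ Fin.cast h) = invCount f := by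
    subst h; rfl
  exact (congrArg invCount (funext (List.get_ofFn f))).trans (invCount_comp_cast _ _)

lemma invCount_get_append (l₁ l₂ : List α) :
    invCount (l₁ ++ l₂).get = invCount (Fin.append l₁.get l₂.get) := by
  rw [← invCount_get_ofFn (Fin.append l₁.get l₂.get), List.ofFn_fin_append, List.ofFn_get,
    List.ofFn_get]

end Inversions

lemma card_filter_prod_of_injective {ι κ β γ : Type*} [Fintype ι] [Fintype κ] [DecidableEq β]
    [DecidableEq γ] {f : ι → β} {g : κ → γ} (hf : f.Injective) (hg : g.Injective)
    (r : β → γ → Prop) [∀ b c, Decidable (r b c)] :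
    #{p : ι × κ | r (f p.1) (g p.2)} = #{q ∈ univ.image f ×ˢ univ.image g | r q.1 q.2} := by
  rw [← prodMap_image_product, univ_product_univ, filter_image,
    card_image_of_injective _ (hf.prodMap hg)]
  rfl

lemma neg_one_pow_card_filter_odd {R ι : Type*} [CommMonoid R] [HasDistribNeg R]
    (s : Finset ι) (c : ι → ℕ) :
    (-1 : R) ^ #{i ∈ s | Odd (c i)} = (-1) ^ ∑ i ∈ s, c i := by
  rw [card_filter, ← prod_pow_eq_pow_sum, ← prod_pow_eq_pow_sum]
  refine prod_congr rfl fun i _ => ?_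
  rcases Nat.even_or_odd (c i) with h | h
  · rw [if_neg (Nat.not_odd_iff_even.2 h), h.neg_one_pow, pow_zero]
  · rw [if_pos h, h.neg_one_pow, pow_one]

lemma card_filter_le_eq_card_filter_lt_add_one {α : Type*} [LinearOrder α] {s : Finset α}
    {a : α} (ha : a ∈ s) :
    #{b ∈ s | b ≤ a} = #{b ∈ s | b < a} + 1 := by
  have : {b ∈ s | b ≤ a} = insert a {b ∈ s | b < a} := by
    ext b
    simp only [mem_filter, mem_insert, le_iff_lt_or_eq]
    grind
  rw [this, card_insert_of_notMem (by simp)]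

lemma ksgn_eq_neg_one_pow_card {M S : Finset ℕ} (hSM : S ⊆ M) :
    ksgn M S = (-1) ^ #{q ∈ S ×ˢ M | q.2 < q.1} := by
  have even_iff (p : ℕ) (hp : p ∈ S) :
      Even #{q ∈ M | q ≤ p} ↔ Odd #{q ∈ M | q < p} := by
    rw [card_filter_le_eq_card_filter_lt_add_one (hSM hp), Nat.even_add_one, Nat.not_even_iff_odd]
  rw [ksgn, filter_congr even_iff, neg_one_pow_card_filter_odd, card_filter, sum_product]
  simp only [card_filter]

/-- If `L` is the concatenation of the elements of `S` in strictly decreasing order with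
the elements of `M \ S` in strictly increasing order, then `(-1)^{#inversions of L}`
equals `ksgn_M(S)`, where an inversion is a pair of positions `i < j` with `L i > L j`. -/
theorem inversions_eq_ksgn (M S : Finset ℕ) (hSM : S ⊆ M) (L : List ℕ)
    (hL : L = (S.sort (· ≤ ·)).reverse ++ (M \ S).sort (· ≤ ·)) :
    (-1 : ℤ) ^ (Finset.univ.filter fun p : Fin L.length × Fin L.length =>
        p.1 < p.2 ∧ L.get p.2 < L.get p.1).card = ksgn M S := by
  subst hL
  set A := (S.sort (· ≤ ·)).reverse
  set B := (M \ S).sort (· ≤ ·)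
  have hA : StrictAnti A.get := S.sortedLT_sort.reverse.strictAnti_get
  have hB : StrictMono B.get := (M \ S).sortedLT_sort.strictMono_get
  have hAS : univ.image A.get = S := by
    rw [Fin.univ_image_get, List.toFinset_reverse, sort_toFinset]
  have hBS : univ.image B.get = M \ S := by rw [Fin.univ_image_get, sort_toFinset]
  have hSM_split : S ×ˢ S ∪ S ×ˢ (M \ S) = S ×ˢ M := by
    rw [← product_union, union_sdiff_of_subset hSM]
  have hdisj : Disjoint (S ×ˢ S) (S ×ˢ (M \ S)) := disjoint_product.2 (Or.inr disjoint_sdiff)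
  calc (-1 : ℤ) ^ invCount (A ++ B).get
      = (-1) ^ (#{p : Fin A.length × Fin A.length | A.get p.2 < A.get p.1} +
          #{p : Fin A.length × Fin B.length | B.get p.2 < A.get p.1}) := by
        rw [invCount_get_append, invCount_append, invCount_of_strictAnti hA,
          invCount_of_strictMono hB, add_zero]
    _ = (-1) ^ #{q ∈ S ×ˢ M | q.2 < q.1} := by
        rw [card_filter_prod_of_injective hA.injective hA.injective (fun a b => b < a),
          card_filter_prod_of_injective hA.injective hB.injective (fun a b => b < a), hAS, hBS,
          ← card_union_of_disjoint (disjoint_filter_filter hdisj), ← filter_union, hSM_split]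
    _ = ksgn M S := (ksgn_eq_neg_one_pow_card hSM).symm
end

section
/- Let R be a commutative ring, N ≥ 1, and x, y : Fin N → R. Let A be the (2N)×(2N) matrix over R with rows and columns indexed by Fin N × Fin 2, whose only nonzero entries are: A (i,0) (i,0) = x i, A (i,0) (i,1) = -1, A (i,1) (i,1) = 1, and A (i,1) (i+1 mod N, 0) = y i, for each i ∈ Fin N. Then det A = (∏_{i} x i) + (-1)^{N+1} · (∏_{i} y i). In particular, when N is odd, det A = ∏ x i + ∏ y i. -/
/-!
Ordering the basis as all `(i, 0)` followed by all `(i, 1)` turns `A` into the block matrix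
`[[diag x, -1], [S, 1]]`, where `S` has the entries `y i` at `(i, i + 1)`. Its Schur complement
gives `det A = det (diag x + S)`. In the Leibniz expansion of this determinant only permutations
with `σ i ∈ {i, i + 1}` for all `i` contribute, and such a permutation is either the identity or
the full rotation `i ↦ i + 1`, an `N`-cycle of sign `(-1) ^ (N + 1)`.
-/

open Matrix Equiv

namespace Equiv.Perm

theorem IsCycle.of_apply_invariant {α : Type*} [Finite α] {f : Perm α} (hf : f.IsCycle)
    {p : α → Prop} (hp : ∀ a, p a → p (f a)) {a b : α} (ha : p a) (hfa : f a ≠ a)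
    (hfb : f b ≠ b) : p b := by
  obtain ⟨k, rfl⟩ := hf.exists_pow_eq hfa hfb
  clear hfb
  induction k with
  | zero => exact ha
  | succ k ih => rw [pow_succ', mul_apply]; exact hp _ ih

theorem eq_one_or_eq_finRotate_of_forall {n : ℕ} {σ : Perm (Fin (n + 2))}
    (hσ : ∀ i, σ i = i ∨ σ i = i + 1) : σ = 1 ∨ σ = finRotate (n + 2) := by
  by_cases hshift : ∃ i, σ i = i + 1
  · right
    obtain ⟨i₀, hi₀⟩ := hshift
    have hstep : ∀ i, σ i = i + 1 → σ (i + 1) = i + 1 + 1 := fun i hi =>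
      (hσ (i + 1)).resolve_left fun h => by simpa using σ.injective (hi.trans h.symm)
    ext1 i
    rw [finRotate_apply]
    exact isCycle_finRotate.of_apply_invariant (p := fun i => σ i = i + 1)
      (by simpa [finRotate_apply] using hstep) hi₀ (by simp [finRotate_apply])
      (by simp [finRotate_apply])
  · push Not at hshift
    left
    ext1 i
    exact (hσ i).resolve_right (hshift i)

end Equiv.Perm

namespace Matrix

variable {R : Type*} [CommRing R]

def cyclicShift {n : ℕ} [NeZero n] (y : Fin n → R) : Matrix (Fin n) (Fin n) R :=
  of fun i j => if j = i + 1 then y i else 0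

theorem det_diagonal_add_cyclicShift_add_two {n : ℕ} (x y : Fin (n + 2) → R) :
    (diagonal x + cyclicShift y).det = (∏ i, x i) + (-1) ^ (n + 1) * ∏ i, y i := by
  set M := diagonal x + cyclicShift y
  have hM : ∀ i j, M i j = (if i = j then x i else 0) + (if j = i + 1 then y i else 0) :=
    fun i j => by simp [M, cyclicShift, diagonal_apply]
  have hsupp : ∀ σ ∉ ({1, finRotate (n + 2)} : Finset (Perm (Fin (n + 2)))),
      (Perm.sign σ : R) * ∏ i, M i (σ i) = 0 := by
    intro σ hσ
    obtain ⟨i, hi⟩ : ∃ i, ¬ (σ i = i ∨ σ i = i + 1) := by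
      by_contra! h
      rcases Perm.eq_one_or_eq_finRotate_of_forall h with rfl | rfl <;> simp at hσ
    rw [Finset.prod_eq_zero (Finset.mem_univ i), mul_zero]
    rw [hM, if_neg (by grind), if_neg (by grind), add_zero]
  have hne : (1 : Perm (Fin (n + 2))) ≠ finRotate (n + 2) := isCycle_finRotate.ne_one.symm
  have hid : ∏ i, M i i = ∏ i, x i :=
    Finset.prod_congr rfl fun i _ => by simp [hM]
  have hrot : ∏ i, M i (i + 1) = ∏ i, y i :=
    Finset.prod_congr rfl fun i _ => by simp [hM]
  rw [← det_transpose, det_apply']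
  simp only [transpose_apply]
  rw [← Finset.sum_subset (Finset.subset_univ _) fun σ _ hσ => hsupp σ hσ,
    Finset.sum_pair hne]
  simp [hid, hrot, finRotate_apply, sign_finRotate]

theorem det_diagonal_add_cyclicShift {n : ℕ} [NeZero n] (x y : Fin n → R) :
    (diagonal x + cyclicShift y).det = (∏ i, x i) + (-1) ^ (n + 1) * ∏ i, y i := by
  obtain _ | _ | n := n
  · exact absurd rfl (NeZero.ne 0)
  · simp [det_unique, cyclicShift]
  · rw [det_diagonal_add_cyclicShift_add_two, pow_add (-1 : R) (n + 1) 2]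
    simp

theorem det_fromBlocks_diagonal_neg_one_cyclicShift {n : ℕ} [NeZero n] (x y : Fin n → R) :
    (fromBlocks (diagonal x) (-1) (cyclicShift y) 1).det =
      (∏ i, x i) + (-1) ^ (n + 1) * ∏ i, y i := by
  rw [det_fromBlocks_one₂₂, neg_one_mul, sub_neg_eq_add, det_diagonal_add_cyclicShift]

end Matrix

def finProdFinTwoEquivSum (N : ℕ) : Fin N × Fin 2 ≃ Fin N ⊕ Fin N :=
  (Equiv.prodComm _ _).trans
    ((finTwoEquiv.prodCongr (Equiv.refl _)).trans (Equiv.boolProdEquivSum _))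

@[simp] theorem finProdFinTwoEquivSum_apply_zero {N : ℕ} (i : Fin N) :
    finProdFinTwoEquivSum N (i, 0) = Sum.inl i := rfl

@[simp] theorem finProdFinTwoEquivSum_apply_one {N : ℕ} (i : Fin N) :
    finProdFinTwoEquivSum N (i, 1) = Sum.inr i := rfl

theorem block_cyclic_eq_submatrix_fromBlocks {R : Type*} [CommRing R] {N : ℕ} [NeZero N]
    {x y : Fin N → R} {A : Matrix (Fin N × Fin 2) (Fin N × Fin 2) R}
    (hx : ∀ i : Fin N, A (i, 0) (i, 0) = x i)
    (h1 : ∀ i : Fin N, A (i, 0) (i, 1) = -1)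
    (h2 : ∀ i : Fin N, A (i, 1) (i, 1) = 1)
    (hy : ∀ i : Fin N, A (i, 1) (i + 1, 0) = y i)
    (hzero : ∀ p q : Fin N × Fin 2,
        ¬ ((p.2 = 0 ∧ q = (p.1, (0 : Fin 2))) ∨ (p.2 = 0 ∧ q = (p.1, (1 : Fin 2))) ∨
            (p.2 = 1 ∧ q = (p.1, (1 : Fin 2))) ∨ (p.2 = 1 ∧ q = (p.1 + 1, (0 : Fin 2)))) →
          A p q = 0) :
    A = (fromBlocks (diagonal x) (-1) (cyclicShift y) 1).submatrix
      (finProdFinTwoEquivSum N) (finProdFinTwoEquivSum N) := by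
  ext ⟨i, a⟩ ⟨k, b⟩
  fin_cases a <;> fin_cases b
  all_goals
    simp only [submatrix_apply, Fin.zero_eta, Fin.mk_one, finProdFinTwoEquivSum_apply_zero,
      finProdFinTwoEquivSum_apply_one, fromBlocks_apply₁₁, fromBlocks_apply₁₂,
      fromBlocks_apply₂₁, fromBlocks_apply₂₂, diagonal_apply, Matrix.neg_apply, one_apply,
      neg_ite, neg_zero, cyclicShift, of_apply]
    split_ifs with h
    · subst h
      first | exact hx _ | exact h1 _ | exact h2 _ | exact hy _
    · rw [hzero _ _ (by simp [Prod.ext_iff]; grind)]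

theorem block_cyclic_det_general (R : Type*) [CommRing R] (N : ℕ) [NeZero N]
    (x y : Fin N → R) (A : Matrix (Fin N × Fin 2) (Fin N × Fin 2) R)
    (hx : ∀ i : Fin N, A (i, 0) (i, 0) = x i)
    (h1 : ∀ i : Fin N, A (i, 0) (i, 1) = -1)
    (h2 : ∀ i : Fin N, A (i, 1) (i, 1) = 1)
    (hy : ∀ i : Fin N, A (i, 1) (i + 1, 0) = y i)
    (hzero : ∀ p q : Fin N × Fin 2,
        ¬ ((p.2 = 0 ∧ q = (p.1, (0 : Fin 2))) ∨ (p.2 = 0 ∧ q = (p.1, (1 : Fin 2))) ∨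
            (p.2 = 1 ∧ q = (p.1, (1 : Fin 2))) ∨ (p.2 = 1 ∧ q = (p.1 + 1, (0 : Fin 2)))) →
          A p q = 0) :
    A.det = (∏ i, x i) + (-1 : R) ^ (N + 1) * ∏ i, y i ∧
      (Odd N → A.det = (∏ i, x i) + ∏ i, y i) := by
  have hdet : A.det = (∏ i, x i) + (-1 : R) ^ (N + 1) * ∏ i, y i := by
    rw [block_cyclic_eq_submatrix_fromBlocks hx h1 h2 hy hzero, det_submatrix_equiv_self,
      det_fromBlocks_diagonal_neg_one_cyclicShift]
  refine ⟨hdet, fun hN => ?_⟩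
  rw [hdet, hN.add_one.neg_one_pow, one_mul]

/-- Block-cyclic determinant identity: if `A` is the `2N × 2N` matrix (rows and columns
indexed by `Fin N × Fin 2`) whose only nonzero entries are
`A (i,0) (i,0) = x i`, `A (i,0) (i,1) = -1`, `A (i,1) (i,1) = 1`, and
`A (i,1) (i+1,0) = y i` (indices mod `N`), then
`det A = ∏ x i + (-1)^(N+1) ∏ y i`; in particular `det A = ∏ x i + ∏ y i` for odd `N`. -/
theorem block_cyclic_det (R : Type*) [CommRing R] (N : ℕ) [NeZero N] (hN : 1 ≤ N)
    (x y : Fin N → R) (A : Matrix (Fin N × Fin 2) (Fin N × Fin 2) R)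
    (hx : ∀ i : Fin N, A (i, 0) (i, 0) = x i)
    (h1 : ∀ i : Fin N, A (i, 0) (i, 1) = -1)
    (h2 : ∀ i : Fin N, A (i, 1) (i, 1) = 1)
    (hy : ∀ i : Fin N, A (i, 1) (i + 1, 0) = y i)
    (hzero : ∀ p q : Fin N × Fin 2,
        ¬ ((p.2 = 0 ∧ q = (p.1, (0 : Fin 2))) ∨ (p.2 = 0 ∧ q = (p.1, (1 : Fin 2))) ∨
            (p.2 = 1 ∧ q = (p.1, (1 : Fin 2))) ∨ (p.2 = 1 ∧ q = (p.1 + 1, (0 : Fin 2)))) →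
          A p q = 0) :
    A.det = (∏ i, x i) + (-1 : R) ^ (N + 1) * ∏ i, y i ∧
      (Odd N → A.det = (∏ i, x i) + ∏ i, y i) :=
  block_cyclic_det_general R N x y A hx h1 h2 hy hzero
end

section
/- Let n ≥ 4 and let e be the edge ideal of the n-cycle: for 1 ≤ j ≤ n-1, e j is the exponent vector of x_j x_{j+1} (value 1 at j and j+1, else 0), and e n is the exponent vector of x_n x_1. Fix i with 2 ≤ i ≤ n-2 and let J = {1, …, i}. Then: (a) e_J is the exponent vector of x_1 x_2 ⋯ x_{i+1}, and M_J = {1, …, i}; (b) for any finset K of {1,…,n}, e_K = e_J if and only if K ⊆ {1,…,i}, 1 ∈ K, i ∈ K, and the complement {1,…,i} \ K contains no two consecutive integers. -/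
open scoped Classical

/-!
The generators are squarefree, so `e_K` is the `0/1` vector of the union of the edges `{k, k+1}`
indexed by `K`, and `e_K = e_J` becomes an equality of vertex sets. Since `i + 1 < n`, an edge
meets `{0, …, i}` only if it lies inside it or is `{i, i+1}` or `{n-1, 0}`, so every `K` covering
exactly `{0, …, i}` lies in `J`; a subset of `J` covers every vertex `≤ i` iff it contains the
end edges `0` and `i - 1` and never misses two consecutive edges.
-/

open Finset Finsupp

section SquarefreeMonomials

variable {ι σ : Type*}

theorem sum_single_one_apply [DecidableEq σ] (s : Finset σ) (a : σ) :
    (∑ x ∈ s, single x 1) a = if a ∈ s then 1 else 0 := by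
  simp [finsetSum_apply, single_apply]

theorem sum_single_one_injective :
    Function.Injective fun s : Finset σ => ∑ x ∈ s, single x 1 := by
  intro s t h
  simpa [toMultiset_sum_single] using congrArg toMultiset h

theorem sup_sum_single_one [DecidableEq ι] [DecidableEq σ] (K : Finset ι) (s : ι → Finset σ) :
    K.sup (fun k => ∑ x ∈ s k, single x 1) = ∑ x ∈ K.biUnion s, single x 1 := by
  induction K using Finset.induction_on with
  | empty => exact bot_eq_zero
  | insert a K _ ih =>
    ext x
    rw [sup_insert, biUnion_insert, sup_apply, ih]
    simp only [sum_single_one_apply, mem_union]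
    by_cases hxa : x ∈ s a <;> by_cases hxK : x ∈ K.biUnion s <;> simp [hxa, hxK]

end SquarefreeMonomials

theorem MJ_eq_of_forall_subset {n : ℕ} {σ : Type*} {e : Fin n → σ →₀ ℕ} {J : Finset (Fin n)}
    (h : ∀ K : Finset (Fin n), K.sup e = J.sup e → K ⊆ J) : MJ e J = J :=
  le_antisymm (Finset.sup_le fun K hK => h K (mem_filter.1 hK).2)
    (le_sup (f := id) (mem_filter.2 ⟨mem_univ J, rfl⟩))

section CycleEdge

variable {n : ℕ} (h1 : 1 < n)

def cycleEdge (k : Fin n) : Finset (Fin n) := {k, k + ⟨1, h1⟩}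

theorem val_add_one_of_lt {k : Fin n} (hk : (k : ℕ) + 1 < n) :
    ((k + ⟨1, h1⟩ : Fin n) : ℕ) = k + 1 := by
  rw [Fin.val_add, Nat.mod_eq_of_lt hk]

theorem self_ne_add_one (k : Fin n) : k ≠ k + ⟨1, h1⟩ := by
  intro h
  have hk := congrArg Fin.val h
  by_cases hlt : (k : ℕ) + 1 < n
  · rw [val_add_one_of_lt h1 hlt] at hk
    omega
  · rw [Fin.val_add, show (k : ℕ) + (⟨1, h1⟩ : Fin n) = n by simp only; omega, Nat.mod_self] at hk
    omega

theorem mem_cycleEdge_of_lt {k x : Fin n} (hk : (k : ℕ) + 1 < n) :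
    x ∈ cycleEdge h1 k ↔ (x : ℕ) = k ∨ (x : ℕ) = k + 1 := by
  rw [cycleEdge, mem_insert, mem_singleton, Fin.ext_iff, Fin.ext_iff, val_add_one_of_lt h1 hk]

theorem mem_biUnion_cycleEdge {K : Finset (Fin n)} (hK : ∀ k ∈ K, (k : ℕ) + 1 < n) (x : Fin n) :
    x ∈ K.biUnion (cycleEdge h1) ↔ x ∈ K ∨ ∃ k ∈ K, (k : ℕ) + 1 = x := by
  simp only [mem_biUnion]
  constructor
  · rintro ⟨k, hk, hx⟩
    rcases (mem_cycleEdge_of_lt h1 (hK k hk)).1 hx with h | h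
    · exact .inl (Fin.ext h ▸ hk)
    · exact .inr ⟨k, hk, h.symm⟩
  · rintro (hx | ⟨k, hk, h⟩)
    · exact ⟨x, hx, (mem_cycleEdge_of_lt h1 (hK x hx)).2 (.inl rfl)⟩
    · exact ⟨k, hk, (mem_cycleEdge_of_lt h1 (hK k hk)).2 (.inr h.symm)⟩

theorem subset_filter_lt_of_biUnion_cycleEdge_subset {i : ℕ} (hin : i + 1 < n) {K : Finset (Fin n)}
    (hK : K.biUnion (cycleEdge h1) ⊆ univ.filter fun x : Fin n => (x : ℕ) ≤ i) :
    K ⊆ univ.filter fun x : Fin n => (x : ℕ) < i := by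
  intro k hk
  have hle : ∀ x ∈ cycleEdge h1 k, (x : ℕ) ≤ i := fun x hx =>
    (mem_filter.1 (hK (mem_biUnion.2 ⟨k, hk, hx⟩))).2
  have hki : (k : ℕ) ≤ i := hle k (mem_insert_self _ _)
  refine mem_filter.2 ⟨mem_univ _, lt_of_le_of_ne hki fun hki' => ?_⟩
  have := hle _ (mem_insert_of_mem (mem_singleton_self _))
  rw [val_add_one_of_lt h1 (by omega)] at this
  omega

theorem biUnion_cycleEdge_eq_iff {i : ℕ} (hin : i + 1 < n) {J : Finset (Fin n)}
    (hJ : J = univ.filter fun j : Fin n => (j : ℕ) < i) (K : Finset (Fin n)) :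
    K.biUnion (cycleEdge h1) = (univ.filter fun x : Fin n => (x : ℕ) ≤ i) ↔
      K ⊆ J ∧ (⟨0, by omega⟩ : Fin n) ∈ K ∧ (⟨i - 1, by omega⟩ : Fin n) ∈ K ∧
        ∀ p q : Fin n, p ∈ J \ K → q ∈ J \ K → (p : ℕ) + 1 ≠ (q : ℕ) := by
  have hmemJ : ∀ x : Fin n, x ∈ J ↔ (x : ℕ) < i := by simp [hJ]
  constructor
  · intro h
    have hKJ : K ⊆ J := hJ ▸ subset_filter_lt_of_biUnion_cycleEdge_subset h1 hin h.subset
    have hKi : ∀ k ∈ K, (k : ℕ) < i := fun k hk => (hmemJ k).1 (hKJ hk)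
    have cover : ∀ x : Fin n, (x : ℕ) ≤ i → x ∈ K ∨ ∃ k ∈ K, (k : ℕ) + 1 = x := fun x hx =>
      (mem_biUnion_cycleEdge h1 (fun k hk => by linarith [hKi k hk]) x).1
        (h ▸ mem_filter.2 ⟨mem_univ x, hx⟩)
    refine ⟨hKJ, ?_, ?_, ?_⟩
    · rcases cover ⟨0, by omega⟩ (Nat.zero_le i) with h0 | ⟨k, -, hk⟩
      · exact h0
      · exact absurd hk (Nat.succ_ne_zero _)
    · rcases cover ⟨i, by omega⟩ le_rfl with hiK | ⟨k, hk, hki⟩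
      · exact absurd (hKi _ hiK) (lt_irrefl i)
      · have hk' : k = ⟨i - 1, by omega⟩ := Fin.ext (by simp only at hki ⊢; omega)
        exact hk' ▸ hk
    · intro p q hp hq hpq
      rw [mem_sdiff] at hp hq
      rcases cover q ((hmemJ q).1 hq.1).le with hqK | ⟨k, hk, hkq⟩
      · exact hq.2 hqK
      · exact hp.2 (Fin.ext (by omega : (k : ℕ) = p) ▸ hk)
  · rintro ⟨hKJ, hfirst, hlast, hgap⟩
    have hKi : ∀ k ∈ K, (k : ℕ) < i := fun k hk => (hmemJ k).1 (hKJ hk)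
    ext x
    rw [mem_biUnion_cycleEdge h1 (fun k hk => by linarith [hKi k hk]), mem_filter]
    constructor
    · rintro (hx | ⟨k, hk, hkx⟩)
      · exact ⟨mem_univ x, (hKi x hx).le⟩
      · exact ⟨mem_univ x, hkx ▸ hKi k hk⟩
    · rintro ⟨-, hx⟩
      by_contra! hnot
      obtain ⟨hxK, hprev⟩ := hnot
      rcases Nat.eq_zero_or_pos (x : ℕ) with hx0 | hxpos
      · exact hxK ((Fin.ext hx0.symm : (⟨0, by omega⟩ : Fin n) = x) ▸ hfirst)
      rcases hx.eq_or_lt with hxi | hxi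
      · exact hprev _ hlast (by simp only; omega)
      · refine hgap ⟨x - 1, by omega⟩ x (mem_sdiff.2 ⟨(hmemJ _).2 (by simp only; omega), ?_⟩)
          (mem_sdiff.2 ⟨(hmemJ x).2 hxi, hxK⟩) (by simp only; omega)
        exact fun h => hprev _ h (by simp only; omega)

end CycleEdge

/-- Vertices are indexed `0, …, n-1`, so `J = {0, …, i-1}` is the paper's `{1, …, i}` and
`j + 1` is taken mod `n`. -/
theorem cycle_edge_ideal_SJ (n : ℕ) (hn : 4 ≤ n)
    (e : Fin n → (Fin n →₀ ℕ))
    (he : ∀ j : Fin n, e j = Finsupp.single j 1 + Finsupp.single (j + ⟨1, by omega⟩) 1)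
    (i : ℕ) (hi1 : 2 ≤ i) (hi2 : i ≤ n - 2)
    (J : Finset (Fin n)) (hJ : J = Finset.univ.filter fun j : Fin n => (j : ℕ) < i) :
    (J.sup e = ∑ j ∈ (Finset.univ.filter fun j : Fin n => (j : ℕ) ≤ i),
        Finsupp.single j 1 ∧
      MJ e J = J) ∧
    ∀ K : Finset (Fin n),
      K.sup e = J.sup e ↔
        K ⊆ J ∧ (⟨0, by omega⟩ : Fin n) ∈ K ∧ (⟨i - 1, by omega⟩ : Fin n) ∈ K ∧
          ∀ p q : Fin n, p ∈ J \ K → q ∈ J \ K → (p : ℕ) + 1 ≠ (q : ℕ) := by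
  have h1 : 1 < n := by omega
  have hin : i + 1 < n := by omega
  have hsup : ∀ K : Finset (Fin n), K.sup e = ∑ x ∈ K.biUnion (cycleEdge h1), single x 1 := by
    intro K
    rw [← sup_sum_single_one]
    refine Finset.sup_congr rfl fun j _ => ?_
    rw [he, cycleEdge, sum_pair (self_ne_add_one h1 j)]
  have hJcover : J.biUnion (cycleEdge h1) = univ.filter fun x : Fin n => (x : ℕ) ≤ i := by
    have hmemJ : ∀ x : Fin n, x ∈ J ↔ (x : ℕ) < i := by simp [hJ]
    exact (biUnion_cycleEdge_eq_iff h1 hin hJ J).2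
      ⟨subset_rfl, (hmemJ _).2 (by simp only; omega), (hmemJ _).2 (by simp only; omega), by simp⟩
  have hb : ∀ K : Finset (Fin n), K.sup e = J.sup e ↔
      K.biUnion (cycleEdge h1) = univ.filter fun x : Fin n => (x : ℕ) ≤ i := fun K => by
    rw [hsup, hsup, sum_single_one_injective.eq_iff, hJcover]
  refine ⟨⟨by rw [hsup, hJcover], MJ_eq_of_forall_subset fun K hK => ?_⟩,
    fun K => (hb K).trans (biUnion_cycleEdge_eq_iff h1 hin hJ K)⟩
  exact ((biUnion_cycleEdge_eq_iff h1 hin hJ K).1 ((hb K).1 hK)).1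
end
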